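/- arXiv:1505.02376 — 4 statements merged into one kernel-verified Lean document; each statement's English description precedes it below -/
import Mathlib

section
/- Let a<b, c<d, and θ₀<θ<θ₁ be real numbers. Let F:[a,b]×[c,d]→ℝ be continuous with F(s,c)=θ₀ and F(s,d)=θ₁ for all s∈[a,b]. Then there exists a connected subset Λ of F⁻¹({θ}) that intersects both {a}×[c,d] and {b}×[c,d]. -/
/-!
Let `K` be the level set `F = θ` in the rectangle. If no component of the compact set `K` meets
both vertical sides, the Šura-Bura theorem splits `K` into disjoint compact pieces `U` and `V`,
with `U` missing the right side and `V` missing the left side. Such a set cannot separate the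
bottom of the rectangle from its top, and a connected set joining them and missing `K` contradicts
the intermediate value theorem, since `F = θ₀` on the bottom and `F = θ₁` on the top.

To see that `U ∪ V` does not separate, cut the rectangle into a fine grid and block the cells
meeting `U ∪ V`. Flood the free cells reachable from the bottom row. If the water reaches the top
row, its cells form the required connected set. Otherwise walk along the shore with the water on
the right: the walk is reversible and stays in a bounded region, so it crosses from the left wall
to the right wall, and the cells on its left form a king path of blocked cells from the first
column to the last. On that path the first cell meeting `V` follows a cell meeting `U`, so `U`
and `V` come closer than the mesh allows.
-/

open Set

section ClopenSeparation

variable {X : Type*} [TopologicalSpace X] [CompactSpace X] [T2Space X]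

lemma exists_isClopen_mem_disjoint {x : X} {B : Set X} (hB : IsClosed B)
    (hx : Disjoint (connectedComponent x) B) : ∃ Z, IsClopen Z ∧ x ∈ Z ∧ Disjoint Z B := by
  have : Nonempty {Z : Set X // IsClopen Z ∧ x ∈ Z} := ⟨⟨univ, isClopen_univ, mem_univ x⟩⟩
  have hdir : Directed (· ⊇ ·) fun Z : {Z : Set X // IsClopen Z ∧ x ∈ Z} => (Z : Set X) :=
    fun Z₁ Z₂ => ⟨⟨Z₁ ∩ Z₂, Z₁.2.1.inter Z₂.2.1, Z₁.2.2, Z₂.2.2⟩, inter_subset_left,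
      inter_subset_right⟩
  have hempty : B ∩ ⋂ Z : {Z : Set X // IsClopen Z ∧ x ∈ Z}, (Z : Set X) = ∅ := by
    rw [← connectedComponent_eq_iInter_isClopen, inter_comm, ← disjoint_iff_inter_eq_empty]
    exact hx
  obtain ⟨Z, hZ⟩ := hB.isCompact.elim_directed_family_closed _ (fun Z => Z.2.1.isClosed) hempty hdir
  exact ⟨Z, Z.2.1, Z.2.2, by rwa [disjoint_iff_inter_eq_empty, inter_comm]⟩

lemma exists_isClopen_superset_disjoint {A B : Set X} (hA : IsClosed A) (hB : IsClosed B)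
    (h : ∀ x ∈ A, Disjoint (connectedComponent x) B) :
    ∃ W, IsClopen W ∧ A ⊆ W ∧ Disjoint W B := by
  choose Z hZ hxZ hZB using fun x : A => exists_isClopen_mem_disjoint hB (h x x.2)
  obtain ⟨t, ht⟩ := hA.isCompact.elim_finite_subcover Z (fun x => (hZ x).isOpen)
    fun x hx => mem_iUnion.mpr ⟨⟨x, hx⟩, hxZ ⟨x, hx⟩⟩
  exact ⟨⋃ x ∈ t, Z x, isClopen_biUnion_finset fun x _ => hZ x, ht,
    disjoint_iUnion₂_left.mpr fun x _ => hZB x⟩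

end ClopenSeparation

lemma IsCompact.exists_split_of_disjoint_connectedComponentIn {X : Type*} [TopologicalSpace X]
    [T2Space X] {K A B : Set X} (hK : IsCompact K) (hA : IsClosed A) (hB : IsClosed B)
    (h : ∀ x ∈ K ∩ A, Disjoint (connectedComponentIn K x) B) :
    ∃ U V : Set X, IsCompact U ∧ IsCompact V ∧ U ∪ V = K ∧ Disjoint U V ∧
      Disjoint U B ∧ Disjoint V A := by
  have : CompactSpace K := isCompact_iff_compactSpace.mp hK
  obtain ⟨W, hW, hAW, hWB⟩ := exists_isClopen_superset_disjoint (X := K)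
    (hA.preimage continuous_subtype_val) (hB.preimage continuous_subtype_val) fun x hx => by
      have hcc := h x ⟨x.2, hx⟩
      rw [connectedComponentIn_eq_image x.2, disjoint_image_left] at hcc
      exact hcc
  refine ⟨(↑) '' W, (↑) '' Wᶜ, hW.isClosed.isCompact.image continuous_subtype_val,
    hW.compl.isClosed.isCompact.image continuous_subtype_val, ?_, ?_, ?_, ?_⟩
  · rw [← image_union, union_compl_self, image_univ, Subtype.range_coe]
  · exact (disjoint_image_iff Subtype.val_injective).mpr disjoint_compl_right
  · exact disjoint_image_left.mpr hWB
  · exact disjoint_image_left.mpr (disjoint_compl_left.mono_right hAW)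

lemma exists_pos_forall_le_dist {X : Type*} [PseudoMetricSpace X] {s t : Set X}
    (hs : IsCompact s) (ht : IsClosed t) (hst : Disjoint s t) :
    ∃ r > 0, ∀ x ∈ s, ∀ y ∈ t, r ≤ dist x y := by
  obtain ⟨r, hr, h⟩ := Metric.exists_pos_forall_lt_edist hs ht hst
  refine ⟨r, hr, fun x hx y hy => ?_⟩
  have := h x hx y hy
  rw [edist_nndist, ENNReal.coe_lt_coe] at this
  exact_mod_cast this.le

namespace GridCrossing

inductive Dir : Type
  | E | N | W | S
  deriving DecidableEq

namespace Dir

instance : Fintype Dir := ⟨{E, N, W, S}, fun d => by cases d <;> simp⟩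

def vec : Dir → ℤ × ℤ
  | E => (1, 0) | N => (0, 1) | W => (-1, 0) | S => (0, -1)

def rotCW : Dir → Dir
  | E => S | S => W | W => N | N => E

def rotCCW : Dir → Dir
  | E => N | N => W | W => S | S => E

/- Cells are indexed by their lower left corner: the edge leaving the vertex `v` in direction `d`
has the cell `v + d.rightCell` on its right and the cell `v + d.leftCell` on its left. -/
def rightCell : Dir → ℤ × ℤ
  | E => (0, -1) | N => (0, 0) | W => (-1, 0) | S => (-1, -1)

def leftCell (d : Dir) : ℤ × ℤ := d.rotCCW.rightCell

@[simp] lemma rotCW_rotCCW (d : Dir) : d.rotCCW.rotCW = d := by cases d <;> rfl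

@[simp] lemma rotCCW_rotCW (d : Dir) : d.rotCW.rotCCW = d := by cases d <;> rfl

lemma leftCell_rotCCW (d : Dir) : d.rotCCW.leftCell = d.leftCell - d.vec := by cases d <;> rfl

lemma rightCell_rotCW (d : Dir) : d.rotCW.rightCell = d.rightCell - d.vec := by cases d <;> rfl

lemma leftCell_rotCW (d : Dir) : d.rotCW.leftCell = d.rightCell := by cases d <;> rfl

lemma rightCell_rotCW_rotCW (d : Dir) : d.rotCW.rotCW.rightCell = d.leftCell - d.vec := by
  cases d <;> rfl

lemma neg_one_le_vec_snd (d : Dir) : -1 ≤ d.vec.2 := by cases d <;> decide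

end Dir

open Dir

def RookAdj (p q : ℤ × ℤ) : Prop :=
  (p.1 = q.1 ∧ (p.2 = q.2 + 1 ∨ q.2 = p.2 + 1)) ∨ (p.2 = q.2 ∧ (p.1 = q.1 + 1 ∨ q.1 = p.1 + 1))

-- Reflexive: consecutive cells on the left of the shore walk may coincide.
def KingAdj (p q : ℤ × ℤ) : Prop :=
  q.1 ≤ p.1 + 1 ∧ p.1 ≤ q.1 + 1 ∧ q.2 ≤ p.2 + 1 ∧ p.2 ≤ q.2 + 1

lemma RookAdj.kingAdj {p q : ℤ × ℤ} (h : RookAdj p q) : KingAdj p q := by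
  unfold RookAdj at h; unfold KingAdj; omega

lemma Dir.rookAdj_leftCell_rightCell (v : ℤ × ℤ) (d : Dir) :
    RookAdj (v + d.leftCell) (v + d.rightCell) := by
  obtain ⟨x, y⟩ := v
  cases d <;> simp [RookAdj, leftCell, rightCell, rotCCW]

lemma Dir.kingAdj_leftCell (v : ℤ × ℤ) (d e : Dir) : KingAdj (v + d.leftCell) (v + e.leftCell) := by
  obtain ⟨x, y⟩ := v
  cases d <;> cases e <;> simp [KingAdj, leftCell, rightCell, rotCCW]

def InGrid (m n : ℤ) (p : ℤ × ℤ) : Prop :=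
  0 ≤ p.1 ∧ p.1 < m ∧ 0 ≤ p.2 ∧ p.2 < n

inductive Reach (B : ℤ × ℤ → Prop) (m n : ℤ) : ℤ × ℤ → Prop
  | base (i : ℤ) : 0 ≤ i → i < m → ¬ B (i, 0) → Reach B m n (i, 0)
  | step (p q : ℤ × ℤ) : Reach B m n q → InGrid m n p → ¬ B p → RookAdj p q → Reach B m n p

lemma Reach.inGrid {B : ℤ × ℤ → Prop} {m n : ℤ} (hn : 0 < n) {p : ℤ × ℤ} (h : Reach B m n p) :
    InGrid m n p := by
  induction h with
  | base i h0 h1 _ => exact ⟨h0, h1, le_rfl, hn⟩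
  | step p q _ hp _ _ _ => exact hp

section Shore

variable (B : ℤ × ℤ → Prop) (m n : ℤ)

-- The half-strip below the grid counts as water, so that the shore starts at the bottom left
-- corner.
def Flooded (p : ℤ × ℤ) : Prop :=
  (0 ≤ p.1 ∧ p.1 < m ∧ p.2 < 0) ∨ Reach B m n p

def IsShore (s : (ℤ × ℤ) × Dir) : Prop :=
  Flooded B m n (s.1 + s.2.rightCell) ∧ ¬ Flooded B m n (s.1 + s.2.leftCell)

-- A wall follower: it keeps the flooded cells on its right.
open Classical in
noncomputable def next : (ℤ × ℤ) × Dir → (ℤ × ℤ) × Dir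
  | (v, d) =>
    if Flooded B m n (v + d.vec + d.rightCell) then
      if Flooded B m n (v + d.vec + d.leftCell) then (v + d.vec, d.rotCCW) else (v + d.vec, d)
    else (v + d.vec, d.rotCW)

open Classical in
noncomputable def prev : (ℤ × ℤ) × Dir → (ℤ × ℤ) × Dir
  | (v, d) =>
    if Flooded B m n (v + d.rotCW.rightCell) then
      if Flooded B m n (v + d.rotCW.rotCW.rightCell) then (v - d.rotCW.vec, d.rotCW)
      else (v - d.vec, d)
    else (v - d.rotCCW.vec, d.rotCCW)

variable {B m n}

lemma next_fst (s : (ℤ × ℤ) × Dir) : (next B m n s).1 = s.1 + s.2.vec := by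
  obtain ⟨v, d⟩ := s
  simp only [next]; split_ifs <;> rfl

lemma IsShore.next_spec {s : (ℤ × ℤ) × Dir} (hs : IsShore B m n s) :
    IsShore B m n (next B m n s) ∧ prev B m n (next B m n s) = s := by
  obtain ⟨v, d⟩ := s
  obtain ⟨hr, hl⟩ := hs
  have addsub : ∀ w : ℤ × ℤ, v + d.vec + (w - d.vec) = v + w := fun w => by abel
  have hr' : Flooded B m n (v + d.vec + d.rotCW.rightCell) := by
    rwa [rightCell_rotCW, addsub]
  have hl' : ¬ Flooded B m n (v + d.vec + d.rotCW.rotCW.rightCell) := by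
    rwa [rightCell_rotCW_rotCW, addsub]
  have hback : v + d.vec - d.vec = v := add_sub_cancel_right v d.vec
  by_cases hA : Flooded B m n (v + d.vec + d.rightCell)
  · by_cases hB : Flooded B m n (v + d.vec + d.leftCell)
    · simp only [next, prev, hA, hB, hr', ↓reduceIte, rotCW_rotCCW, hback, and_true]
      refine ⟨hB, ?_⟩
      rwa [leftCell_rotCCW, addsub]
    · simp only [next, prev, hA, hB, hr', hl', ↓reduceIte, hback, and_true]
      exact ⟨hA, hB⟩
  · simp only [next, prev, hA, hl', ↓reduceIte, rotCCW_rotCW, hback, and_true]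
    refine ⟨hr', ?_⟩
    rwa [leftCell_rotCW]

lemma Flooded.blocked_of_rookAdj {p q : ℤ × ℤ} (hq : Flooded B m n q) (hp : ¬ Flooded B m n p)
    (hg : InGrid m n p) (hpq : RookAdj p q) : B p := by
  by_contra hS
  apply hp
  rcases hq with ⟨_, _, hq⟩ | hq
  · have hp0 : p.2 = 0 := by unfold RookAdj at hpq; unfold InGrid at hg; omega
    obtain ⟨x, y⟩ := p
    obtain rfl : y = 0 := hp0
    exact Or.inr (.base x hg.1 hg.2.1 hS)
  · exact Or.inr (.step p q hq hg hS hpq)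

section Bounds

variable (hn : 0 < n) (htop : ∀ i, ¬ Reach B m n (i, n - 1))
include hn

lemma Flooded.fst_mem {p : ℤ × ℤ} (h : Flooded B m n p) : 0 ≤ p.1 ∧ p.1 < m := by
  rcases h with ⟨h0, h1, _⟩ | hr
  · exact ⟨h0, h1⟩
  · exact ⟨(hr.inGrid hn).1, (hr.inGrid hn).2.1⟩

lemma flooded_iff_of_snd_neg {p : ℤ × ℤ} (hp : p.2 < 0) :
    Flooded B m n p ↔ 0 ≤ p.1 ∧ p.1 < m := by
  refine ⟨Flooded.fst_mem hn, fun h => Or.inl ⟨h.1, h.2, hp⟩⟩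

include htop in
lemma Flooded.snd_lt {p : ℤ × ℤ} (h : Flooded B m n p) : p.2 < n - 1 := by
  rcases h with ⟨_, _, h⟩ | hr
  · omega
  · obtain ⟨_, _, _, h⟩ := hr.inGrid hn
    rcases (show p.2 < n - 1 ∨ p.2 = n - 1 by omega) with h' | h'
    · exact h'
    · exact absurd (h' ▸ hr) (htop p.1)

include htop in
lemma IsShore.bounds {s : (ℤ × ℤ) × Dir} (hs : IsShore B m n s) :
    0 ≤ s.1.1 ∧ s.1.1 ≤ m ∧ s.1.2 ≤ n - 1 := by
  obtain ⟨⟨x, y⟩, d⟩ := s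
  have hx := hs.1.fst_mem hn
  have hy := hs.1.snd_lt hn htop
  cases d <;> simp only [rightCell, Prod.mk_add_mk] at hx hy ⊢ <;> omega

lemma IsShore.eq_of_snd_neg {s : (ℤ × ℤ) × Dir} (hs : IsShore B m n s) (hy : s.1.2 < 0) :
    (s.2 = N ∧ s.1.1 = 0) ∨ (s.2 = Dir.S ∧ s.1.1 = m) := by
  obtain ⟨⟨x, y⟩, d⟩ := s
  obtain ⟨hr, hl⟩ := hs
  simp only at hy ⊢
  cases d <;> simp only [leftCell, rightCell, rotCCW, Prod.mk_add_mk] at hr hl <;>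
    rw [flooded_iff_of_snd_neg hn (by dsimp only; omega)] at hr hl <;>
    simp only [reduceCtorEq, true_and, false_and, false_or, or_false] <;> omega

include htop in
lemma IsShore.leftCell_inGrid {s : (ℤ × ℤ) × Dir} (hs : IsShore B m n s)
    (h0 : ¬ (s.2 = N ∧ s.1.1 = 0)) (hm : s.1.1 ≠ m) : InGrid m n (s.1 + s.2.leftCell) := by
  have hx := hs.1.fst_mem hn
  have hy := hs.1.snd_lt hn htop
  have hl : (s.1 + s.2.leftCell).2 < 0 →
      ¬ (0 ≤ (s.1 + s.2.leftCell).1 ∧ (s.1 + s.2.leftCell).1 < m) :=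
    fun h hx => hs.2 ((flooded_iff_of_snd_neg hn h).2 hx)
  obtain ⟨⟨x, y⟩, d⟩ := s
  cases d <;>
    simp only [InGrid, leftCell, rightCell, rotCCW, Prod.mk_add_mk, reduceCtorEq, true_and,
      false_and, not_false_eq_true] at hx hy hl h0 hm ⊢ <;> omega

end Bounds

variable (B m n) in
noncomputable def shoreWalk (k : ℕ) : (ℤ × ℤ) × Dir := (next B m n)^[k] ((0, -1), N)

@[simp] lemma shoreWalk_zero : shoreWalk B m n 0 = ((0, -1), N) := rfl

lemma shoreWalk_succ (k : ℕ) : shoreWalk B m n (k + 1) = next B m n (shoreWalk B m n k) :=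
  Function.iterate_succ_apply' _ _ _

lemma next_north_of_fst_eq_zero (hn : 0 < n) {v : ℤ × ℤ} (hv : v.1 = 0) :
    next B m n (v, N) = (v + N.vec, N) ∨ next B m n (v, N) = (v + N.vec, E) := by
  have hleft : ¬ Flooded B m n (v + N.vec + N.leftCell) := fun h => by
    have := (h.fst_mem hn).1
    simp [vec, leftCell, rightCell, rotCCW, hv] at this
  simp only [next, hleft, ↓reduceIte]
  split_ifs
  · exact Or.inl rfl
  · exact Or.inr rfl

section Walk

variable (hm : 0 < m) (hn : 0 < n) (htop : ∀ i, ¬ Reach B m n (i, n - 1))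
include hm hn

lemma isShore_shoreWalk (k : ℕ) : IsShore B m n (shoreWalk B m n k) := by
  induction k with
  | zero =>
    refine ⟨Or.inl ⟨le_rfl, hm, by simp [rightCell]⟩, fun h => ?_⟩
    have := (h.fst_mem hn).1
    simp [leftCell, rightCell, rotCCW] at this
  | succ k ih => rw [shoreWalk_succ]; exact ih.next_spec.1

lemma prev_shoreWalk_succ (k : ℕ) :
    prev B m n (shoreWalk B m n (k + 1)) = shoreWalk B m n k := by
  rw [shoreWalk_succ]; exact (isShore_shoreWalk hm hn k).next_spec.2

lemma prev_shoreWalk_zero : prev B m n (shoreWalk B m n 0) = ((0, -2), N) := by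
  have hsea : Flooded B m n ((0, -1) + N.rotCW.rightCell) :=
    Or.inl ⟨le_rfl, hm, by simp [rotCW, rightCell]⟩
  have hout : ¬ Flooded B m n ((0, -1) + N.rotCW.rotCW.rightCell) := fun h => by
    have := (h.fst_mem hn).1
    simp [rotCW, rightCell] at this
  simp only [shoreWalk_zero, prev, hsea, hout, ↓reduceIte]
  simp [vec]

lemma shoreWalk_eq_sub {i j : ℕ} (hij : i ≤ j) (h : shoreWalk B m n i = shoreWalk B m n j) :
    shoreWalk B m n 0 = shoreWalk B m n (j - i) := by
  induction i generalizing j with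
  | zero => simpa using h
  | succ i ih =>
    obtain ⟨j, rfl⟩ : ∃ j', j = j' + 1 := ⟨j - 1, by omega⟩
    have h' := congrArg (prev B m n) h
    rw [prev_shoreWalk_succ hm hn, prev_shoreWalk_succ hm hn] at h'
    simpa using ih (by omega) h'

lemma neg_one_le_snd_shoreWalk {k : ℕ} (hk : ∀ j < k, (shoreWalk B m n j).1.1 ≠ m) :
    -1 ≤ (shoreWalk B m n k).1.2 := by
  induction k with
  | zero => simp
  | succ k ih =>
    have hge := ih fun j hj => hk j (by omega)
    rw [shoreWalk_succ, next_fst, Prod.snd_add]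
    rcases (show 0 ≤ (shoreWalk B m n k).1.2 ∨ (shoreWalk B m n k).1.2 = -1 by omega) with hy | hy
    · have := (shoreWalk B m n k).2.neg_one_le_vec_snd
      omega
    · rcases (isShore_shoreWalk (B := B) hm hn k).eq_of_snd_neg hn (by omega) with ⟨hd, _⟩ | ⟨_, hx⟩
      · rw [hd, vec]; omega
      · exact absurd hx (hk k (by omega))

/- The walk never repeats an edge: `prev` undoes `next`, and before the walk reaches the right wall
`prev` of its first edge lies below everything it visits. A walk in a finite box must repeat. -/
include htop in
lemma exists_fst_shoreWalk_eq : ∃ k, (shoreWalk B m n k).1.1 = m := by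
  by_contra! hno
  have hlow (k : ℕ) := neg_one_le_snd_shoreWalk hm hn (k := k) fun j _ => hno j
  have hinj : Function.Injective (shoreWalk B m n) := by
    intro i j h
    wlog hij : i ≤ j generalizing i j
    · exact (this h.symm (by omega)).symm
    by_contra hne
    obtain ⟨p, hp⟩ : ∃ p, j - i = p + 1 := ⟨j - i - 1, by omega⟩
    have := hlow p
    rw [← prev_shoreWalk_succ hm hn p, ← hp, ← shoreWalk_eq_sub hm hn hij h,
      prev_shoreWalk_zero hm hn] at this
    norm_num at this
  have hbox : Set.range (shoreWalk B m n) ⊆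
      (Set.Icc 0 m ×ˢ Set.Icc (-1) (n - 1)) ×ˢ (Set.univ : Set Dir) := by
    rintro _ ⟨k, rfl⟩
    obtain ⟨h0, hm, hn⟩ := (isShore_shoreWalk hm hn k).bounds hn htop
    exact ⟨⟨⟨h0, hm⟩, hlow k, hn⟩, trivial⟩
  exact Set.infinite_range_of_injective hinj
    ((((Set.finite_Icc _ _).prod (Set.finite_Icc _ _)).prod Set.finite_univ).subset hbox)

include htop in
lemma exists_shoreWalk_crossing : ∃ k₁ k₂, k₁ ≤ k₂ ∧
    (shoreWalk B m n k₁).1.1 = 0 ∧ (shoreWalk B m n k₁).2 = E ∧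
    (shoreWalk B m n k₂).1.1 = m - 1 ∧ (shoreWalk B m n k₂).2 = E ∧
    ∀ k, k₁ ≤ k → k ≤ k₂ →
      ¬ ((shoreWalk B m n k).2 = N ∧ (shoreWalk B m n k).1.1 = 0) ∧
        (shoreWalk B m n k).1.1 ≠ m := by
  classical
  have hhit := exists_fst_shoreWalk_eq hm hn htop
  obtain ⟨k₂, hk₂⟩ : ∃ k₂, Nat.find hhit = k₂ + 1 :=
    Nat.exists_eq_add_one.mpr <| Nat.pos_of_ne_zero fun h => by
      have := Nat.find_spec hhit
      simp only [h, shoreWalk_zero] at this; omega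
  have hbefore (k : ℕ) (hk : k ≤ k₂) : (shoreWalk B m n k).1.1 ≠ m := Nat.find_min hhit (by omega)
  have hlast : (shoreWalk B m n k₂).1.1 = m - 1 ∧ (shoreWalk B m n k₂).2 = E := by
    have hstep := Nat.find_spec hhit
    rw [hk₂, shoreWalk_succ, next_fst, Prod.fst_add] at hstep
    have hne := hbefore k₂ le_rfl
    have hle := ((isShore_shoreWalk (B := B) hm hn k₂).bounds hn htop).2.1
    cases hd : (shoreWalk B m n k₂).2 <;>
      simp only [vec, hd, reduceCtorEq, and_true, and_false] at hstep ⊢ <;> omega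
  let P (k : ℕ) : Prop := (shoreWalk B m n k).2 = N ∧ (shoreWalk B m n k).1.1 = 0
  have hP : P (Nat.findGreatest P k₂) := Nat.findGreatest_spec (Nat.zero_le _) ⟨rfl, rfl⟩
  have hlt : Nat.findGreatest P k₂ < k₂ := by
    refine lt_of_le_of_ne (Nat.findGreatest_le k₂) fun h => ?_
    rw [h] at hP
    simp [P, hlast.2] at hP
  -- the last time before `k₂` that the walk climbs the left wall; it then turns into the grid
  set k₀ := Nat.findGreatest P k₂
  have hturn : shoreWalk B m n (k₀ + 1) = ((shoreWalk B m n k₀).1 + N.vec, E) := by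
    have hfk₀ : shoreWalk B m n k₀ = ((shoreWalk B m n k₀).1, N) := Prod.ext rfl hP.1
    rw [shoreWalk_succ, hfk₀]
    refine (next_north_of_fst_eq_zero hn hP.2).resolve_left fun h => ?_
    refine Nat.findGreatest_is_greatest (Nat.lt_succ_self k₀) (by omega : k₀ + 1 ≤ k₂) ⟨?_, ?_⟩
    · rw [shoreWalk_succ, hfk₀, h]
    · rw [shoreWalk_succ, hfk₀, h]; simpa [vec] using hP.2
  refine ⟨k₀ + 1, k₂, hlt, ?_, by rw [hturn], hlast.1, hlast.2,
    fun k hk₁ hk₂ => ⟨?_, hbefore k hk₂⟩⟩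
  · rw [hturn]; simpa [vec] using hP.2
  · exact Nat.findGreatest_is_greatest (P := P) (by omega) hk₂

include htop in
theorem exists_kingPath : ∃ (len : ℕ) (g : ℕ → ℤ × ℤ),
    (∀ k ≤ len, InGrid m n (g k) ∧ B (g k)) ∧ (∀ k < len, KingAdj (g k) (g (k + 1))) ∧
      (g 0).1 = 0 ∧ (g len).1 = m - 1 := by
  obtain ⟨k₁, k₂, hk, h₁, hE₁, h₂, hE₂, hmid⟩ := exists_shoreWalk_crossing hm hn htop
  let f := shoreWalk B m n
  refine ⟨k₂ - k₁, fun k => (f (k₁ + k)).1 + (f (k₁ + k)).2.leftCell, fun k hk => ?_,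
    fun k hk => ?_, ?_, ?_⟩
  · have hs := isShore_shoreWalk (B := B) hm hn (k₁ + k)
    have hg := hs.leftCell_inGrid hn htop (hmid _ (by omega) (by omega)).1
      (hmid _ (by omega) (by omega)).2
    exact ⟨hg, hs.1.blocked_of_rookAdj hs.2 hg (rookAdj_leftCell_rightCell _ _)⟩
  · have hcur : (f (k₁ + k)).1 + (f (k₁ + k)).2.leftCell =
        (f (k₁ + k)).1 + (f (k₁ + k)).2.vec + (f (k₁ + k)).2.rotCCW.leftCell := by
      rw [leftCell_rotCCW]; abel
    simp only [hcur, ← add_assoc, f, shoreWalk_succ, next_fst]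
    exact kingAdj_leftCell _ _ _
  · simp [f, hE₁, leftCell, rotCCW, rightCell, h₁]
  · simp [f, Nat.add_sub_cancel' hk, hE₂, leftCell, rotCCW, rightCell, h₂]

end Walk

end Shore

def gridCell (a c h k : ℝ) (p : ℤ × ℤ) : Set (ℝ × ℝ) :=
  Icc (a + p.1 * h) (a + (p.1 + 1) * h) ×ˢ Icc (c + p.2 * k) (c + (p.2 + 1) * k)

section Cells

variable {a c h k : ℝ}

lemma Icc_inter_Icc_nonempty_of_near (hh : 0 ≤ h) {i j : ℤ} (hij : j ≤ i + 1) (hji : i ≤ j + 1) :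
    (Icc (a + i * h) (a + (i + 1) * h) ∩ Icc (a + j * h) (a + (j + 1) * h)).Nonempty := by
  refine ⟨a + (max i j : ℤ) * h, ⟨?_, ?_⟩, ?_, ?_⟩ <;> gcongr <;> push_cast <;>
    exact_mod_cast (by omega)

lemma abs_sub_le_of_near (hh : 0 ≤ h) {i j : ℤ} (hij : j ≤ i + 1) (hji : i ≤ j + 1) {x y : ℝ}
    (hx : x ∈ Icc (a + i * h) (a + (i + 1) * h)) (hy : y ∈ Icc (a + j * h) (a + (j + 1) * h)) :
    |x - y| ≤ 2 * h := by
  have hij' : (j : ℝ) * h ≤ (i + 1) * h := by gcongr; exact_mod_cast hij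
  have hji' : (i : ℝ) * h ≤ (j + 1) * h := by gcongr; exact_mod_cast hji
  rw [abs_le]
  constructor <;> nlinarith [hx.1, hx.2, hy.1, hy.2]

lemma dist_le_of_mem_gridCell_left (hh : 0 ≤ h) {p : ℤ × ℤ} (hp : p.1 = 0) {u : ℝ × ℝ}
    (hu : u ∈ gridCell a c h k p) : dist u (a, u.2) ≤ h := by
  obtain ⟨⟨hu₁, hu₂⟩, -⟩ := hu
  rw [hp] at hu₁ hu₂
  rw [Prod.dist_eq, dist_self, Real.dist_eq]
  push_cast at hu₁ hu₂
  exact max_le (abs_le.mpr ⟨by linarith, by linarith⟩) hh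

lemma dist_le_of_mem_gridCell_right (hh : 0 ≤ h) {b : ℝ} {M : ℤ} (hM : M * h = b - a) {p : ℤ × ℤ}
    (hp : p.1 = M - 1) {u : ℝ × ℝ} (hu : u ∈ gridCell a c h k p) : dist u (b, u.2) ≤ h := by
  obtain ⟨⟨hu₁, hu₂⟩, -⟩ := hu
  rw [hp] at hu₁ hu₂
  rw [Prod.dist_eq, dist_self, Real.dist_eq]
  push_cast at hu₁ hu₂
  exact max_le (abs_le.mpr ⟨by linarith, by linarith⟩) hh

variable (hh : 0 ≤ h) (hk : 0 ≤ k)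
include hh hk

lemma isConnected_gridCell (p : ℤ × ℤ) : IsConnected (gridCell a c h k p) :=
  ((convex_Icc _ _).prod (convex_Icc _ _)).isConnected
    (prod_nonempty_iff.mpr ⟨nonempty_Icc.mpr (by linarith), nonempty_Icc.mpr (by linarith)⟩)

lemma gridCell_inter_nonempty {p q : ℤ × ℤ} (hpq : KingAdj p q) :
    (gridCell a c h k p ∩ gridCell a c h k q).Nonempty := by
  obtain ⟨h₁, h₂, h₃, h₄⟩ := hpq
  obtain ⟨x, hxp, hxq⟩ := Icc_inter_Icc_nonempty_of_near (a := a) hh h₁ h₂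
  obtain ⟨y, hyp, hyq⟩ := Icc_inter_Icc_nonempty_of_near (a := c) hk h₃ h₄
  exact ⟨(x, y), ⟨hxp, hyp⟩, hxq, hyq⟩

lemma dist_le_of_kingAdj {p q : ℤ × ℤ} (hpq : KingAdj p q) {u v : ℝ × ℝ}
    (hu : u ∈ gridCell a c h k p) (hv : v ∈ gridCell a c h k q) : dist u v ≤ 2 * max h k := by
  obtain ⟨h₁, h₂, h₃, h₄⟩ := hpq
  rw [Prod.dist_eq, Real.dist_eq, Real.dist_eq]
  exact max_le ((abs_sub_le_of_near hh h₁ h₂ hu.1 hv.1).trans (by gcongr; exact le_max_left _ _))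
    ((abs_sub_le_of_near hk h₃ h₄ hu.2 hv.2).trans (by gcongr; exact le_max_right _ _))

lemma gridCell_subset {b d : ℝ} {M N : ℤ} (hM : M * h = b - a) (hN : N * k = d - c)
    {p : ℤ × ℤ} (hp : InGrid M N p) : gridCell a c h k p ⊆ Icc a b ×ˢ Icc c d := by
  obtain ⟨h₀, h₁, h₂, h₃⟩ := hp
  have h₀' : (0 : ℝ) ≤ p.1 := by exact_mod_cast h₀
  have h₁' : (p.1 : ℝ) + 1 ≤ M := by exact_mod_cast h₁
  have h₂' : (0 : ℝ) ≤ p.2 := by exact_mod_cast h₂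
  have h₃' : (p.2 : ℝ) + 1 ≤ N := by exact_mod_cast h₃
  rintro u ⟨⟨hu₁, hu₂⟩, hu₃, hu₄⟩
  refine ⟨⟨?_, ?_⟩, ?_, ?_⟩ <;> nlinarith

lemma exists_isConnected_of_reach {R T : Set (ℝ × ℝ)} {M N : ℤ} (hN : 0 < N)
    (hR : ∀ p, InGrid M N p → gridCell a c h k p ⊆ R) {p : ℤ × ℤ}
    (hp : Reach (fun q => (gridCell a c h k q ∩ T).Nonempty) M N p) :
    ∃ C ⊆ R, Disjoint C T ∧ IsConnected C ∧ (∃ x, (x, c) ∈ C) ∧ gridCell a c h k p ⊆ C := by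
  induction hp with
  | base i h₀ h₁ hfree =>
    refine ⟨_, hR _ ⟨h₀, h₁, le_rfl, hN⟩,
      disjoint_iff_inter_eq_empty.mpr (not_nonempty_iff_eq_empty.mp hfree),
      isConnected_gridCell hh hk _, ⟨a + i * h, ⟨le_rfl, by linarith⟩, by simp [hk]⟩, subset_rfl⟩
  | step p q _ hp hfree hpq ih =>
    obtain ⟨C, hCR, hCT, hC, hbot, hqC⟩ := ih
    obtain ⟨z, hzp, hzq⟩ := gridCell_inter_nonempty hh hk hpq.kingAdj
    exact ⟨C ∪ gridCell a c h k p, union_subset hCR (hR p hp),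
      disjoint_union_left.mpr
        ⟨hCT, disjoint_iff_inter_eq_empty.mpr (not_nonempty_iff_eq_empty.mp hfree)⟩,
      hC.union ⟨z, hqC hzq, hzp⟩ (isConnected_gridCell hh hk p), hbot.imp fun x hx => Or.inl hx,
      subset_union_right⟩

end Cells

end GridCrossing

lemma exists_lt_and_succ_of_forall_or {P Q : ℕ → Prop} {len : ℕ} (h : ∀ j ≤ len, P j ∨ Q j)
    (h₀ : ¬ Q 0) (hlen : ¬ P len) : ∃ j < len, P j ∧ Q (j + 1) := by
  induction len with
  | zero => exact absurd ((h 0 le_rfl).resolve_right h₀) hlen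
  | succ len ih =>
    by_cases hP : P len
    · exact ⟨len, Nat.lt_succ_self _, hP, (h _ le_rfl).resolve_left hlen⟩
    · obtain ⟨j, hj, hPQ⟩ := ih (fun j hj => h j (hj.trans (Nat.le_succ _))) hP
      exact ⟨j, hj.trans (Nat.lt_succ_self _), hPQ⟩

lemma exists_nat_two_mul_max_div_lt (x y : ℝ) {ρ : ℝ} (hρ : 0 < ρ) :
    ∃ N : ℕ, 0 < N ∧ 2 * max (x / N) (y / N) < ρ := by
  obtain ⟨N, hN⟩ := exists_nat_gt (max (2 * max x y / ρ) 0)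
  have hN₀ : (0 : ℝ) < N := (le_max_right _ _).trans_lt hN
  refine ⟨N, by exact_mod_cast hN₀, ?_⟩
  rw [max_div_div_right hN₀.le, ← mul_div_assoc, div_lt_iff₀ hN₀]
  have := (le_max_left _ _).trans_lt hN
  rw [div_lt_iff₀ hρ] at this
  linarith

open GridCrossing in
theorem exists_isConnected_crossing {a b c d : ℝ} (hab : a ≤ b) (hcd : c ≤ d)
    {U V : Set (ℝ × ℝ)} (hU : IsCompact U) (hV : IsCompact V) (hUV : Disjoint U V)
    (hUb : Disjoint U ({b} ×ˢ Icc c d)) (hVa : Disjoint V ({a} ×ˢ Icc c d)) :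
    ∃ C ⊆ Icc a b ×ˢ Icc c d, Disjoint C (U ∪ V) ∧ IsConnected C ∧
      (∃ x, (x, c) ∈ C) ∧ ∃ x, (x, d) ∈ C := by
  obtain ⟨ρ₁, hρ₁, hUV⟩ := exists_pos_forall_le_dist hU hV.isClosed hUV
  obtain ⟨ρ₂, hρ₂, hUb⟩ := exists_pos_forall_le_dist hU (isClosed_singleton.prod isClosed_Icc) hUb
  obtain ⟨ρ₃, hρ₃, hVa⟩ := exists_pos_forall_le_dist hV (isClosed_singleton.prod isClosed_Icc) hVa
  obtain ⟨N, hN, hmesh⟩ :=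
    exists_nat_two_mul_max_div_lt (b - a) (d - c) (lt_min hρ₁ (lt_min hρ₂ hρ₃))
  rw [lt_min_iff, lt_min_iff] at hmesh
  set h := (b - a) / N
  set k := (d - c) / N
  have hh : 0 ≤ h := div_nonneg (sub_nonneg.2 hab) N.cast_nonneg
  have hk : 0 ≤ k := div_nonneg (sub_nonneg.2 hcd) N.cast_nonneg
  have hNh : ((N : ℤ) : ℝ) * h = b - a := by push_cast; exact mul_div_cancel₀ _ (by positivity)
  have hNk : ((N : ℤ) : ℝ) * k = d - c := by push_cast; exact mul_div_cancel₀ _ (by positivity)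
  have hhρ : h < min ρ₂ ρ₃ := lt_min (by linarith [le_max_left h k]) (by linarith [le_max_left h k])
  have hcell (p : ℤ × ℤ) := gridCell_subset (a := a) (c := c) (p := p) hh hk hNh hNk
  by_cases htop : ∃ i, Reach (fun p => (gridCell a c h k p ∩ (U ∪ V)).Nonempty) N N (i, N - 1)
  · obtain ⟨i, hi⟩ := htop
    obtain ⟨C, hCR, hCT, hC, hbot, hiC⟩ :=
      exists_isConnected_of_reach hh hk (by exact_mod_cast hN) hcell hi
    refine ⟨C, hCR, hCT, hC, hbot, a + i * h, hiC ⟨⟨le_rfl, by linarith⟩, ?_, ?_⟩⟩ <;>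
      push_cast at hNk ⊢ <;> linarith
  push Not at htop
  obtain ⟨len, g, hg, hnear, hg₀, hglen⟩ :=
    exists_kingPath (by exact_mod_cast hN) (by exact_mod_cast hN) htop
  obtain ⟨j, hj, ⟨u, huc, huU⟩, ⟨v, hvc, hvV⟩⟩ := exists_lt_and_succ_of_forall_or
    (P := fun j => (gridCell a c h k (g j) ∩ U).Nonempty)
    (Q := fun j => (gridCell a c h k (g j) ∩ V).Nonempty)
    (fun j hj => by rw [← union_nonempty, ← inter_union_distrib_left]; exact (hg j hj).2)
    (fun ⟨v, hvc, hvV⟩ => (hVa v hvV (a, v.2) ⟨rfl, (hcell _ (hg 0 len.zero_le).1 hvc).2⟩).not_gt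
      ((dist_le_of_mem_gridCell_left hh hg₀ hvc).trans_lt (hhρ.trans_le (min_le_right _ _))))
    (fun ⟨u, huc, huU⟩ => (hUb u huU (b, u.2) ⟨rfl, (hcell _ (hg len le_rfl).1 huc).2⟩).not_gt
      ((dist_le_of_mem_gridCell_right hh hNh hglen huc).trans_lt (hhρ.trans_le (min_le_left _ _))))
  exact absurd (hUV u huU v hvV) <| not_le.mpr
    ((dist_le_of_kingAdj hh hk (hnear j hj) huc hvc).trans_lt hmesh.1)

theorem stmt_0 (a b c d θ₀ θ θ₁ : ℝ) (hab : a < b) (hcd : c < d)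
    (hθ₀ : θ₀ < θ) (hθ₁ : θ < θ₁)
    (F : ℝ × ℝ → ℝ) (hF : ContinuousOn F (Icc a b ×ˢ Icc c d))
    (hbot : ∀ s ∈ Icc a b, F (s, c) = θ₀)
    (htop : ∀ s ∈ Icc a b, F (s, d) = θ₁) :
    ∃ Λ : Set (ℝ × ℝ), Λ ⊆ (Icc a b ×ˢ Icc c d) ∩ F ⁻¹' {θ} ∧
      IsConnected Λ ∧
      (Λ ∩ ({a} ×ˢ Icc c d)).Nonempty ∧
      (Λ ∩ ({b} ×ˢ Icc c d)).Nonempty := by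
  set K := (Icc a b ×ˢ Icc c d) ∩ F ⁻¹' {θ}
  by_cases hcross : ∃ x ∈ K, (connectedComponentIn K x ∩ ({a} ×ˢ Icc c d)).Nonempty ∧
      (connectedComponentIn K x ∩ ({b} ×ˢ Icc c d)).Nonempty
  · obtain ⟨x, hx, hxa, hxb⟩ := hcross
    exact ⟨_, connectedComponentIn_subset K x, isConnected_connectedComponentIn_iff.mpr hx,
      hxa, hxb⟩
  exfalso
  have hK : IsCompact K := (isCompact_Icc.prod isCompact_Icc).of_isClosed_subset
    (hF.preimage_isClosed_of_isClosed (isClosed_Icc.prod isClosed_Icc) isClosed_singleton)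
    inter_subset_left
  obtain ⟨U, V, hU, hV, hUVK, hUV, hUb, hVa⟩ := hK.exists_split_of_disjoint_connectedComponentIn
    (isClosed_singleton.prod isClosed_Icc) (isClosed_singleton.prod isClosed_Icc)
    fun x hx => not_not.mp fun h => hcross
      ⟨x, hx.1, ⟨x, mem_connectedComponentIn hx.1, hx.2⟩, not_disjoint_iff_nonempty_inter.mp h⟩
  obtain ⟨C, hCR, hCK, hC, ⟨x, hx⟩, ⟨y, hy⟩⟩ :=
    exists_isConnected_crossing hab.le hcd.le hU hV hUV hUb hVa
  obtain ⟨z, hzC, hz⟩ := hC.isPreconnected.intermediate_value hx hy (hF.mono hCR)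
    (by rw [hbot x (hCR hx).1, htop y (hCR hy).1]; exact ⟨hθ₀.le, hθ₁.le⟩)
  exact hCK.ne_of_mem hzC (hUVK ▸ ⟨hCR hzC, hz⟩) rfl
end

section
/- Let a<b, c<d be real and F=(F₁,F₂):[a,b]×[c,d]→ℝ² continuous with F₁(a,t)<0 and F₁(b,t)>0 for all t∈[c,d], and F₂(s,c)<0 and F₂(s,d)>0 for all s∈[a,b]. Then there exists (s₀,t₀)∈(a,b)×(c,d) with F(s₀,t₀)=(0,0). -/
/-!
If `F` had no zero, the map `F`, read as a nonvanishing complex function on the simply connected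
rectangle, would lift through `Complex.exp`, giving a continuous angle `θ` with
`F = r (cos θ, sin θ)`, `r > 0`. Along each edge `F` avoids a coordinate axis, so `θ` varies by
less than `π` there, and the quadrants containing `F` at the corners then force
`θ(a,c) < θ(b,c) < θ(b,d) < θ(a,d) < θ(a,c)`.
-/

open Set Real

theorem abs_sub_lt_pi_of_sin_ne_zero {g : ℝ → ℝ} {p q : ℝ} (hg : ContinuousOn g (uIcc p q))
    (hsin : ∀ s ∈ uIcc p q, sin (g s) ≠ 0) : |g q - g p| < π := by
  by_contra! h
  -- the least multiple of `π` above `min (g p) (g q)` lies between `g p` and `g q`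
  set k : ℤ := ⌈min (g p) (g q) / π⌉
  have hk : (k : ℝ) * π ∈ uIcc (g p) (g q) := by
    have hle := Int.le_ceil (min (g p) (g q) / π)
    have hlt := Int.ceil_lt_add_one (min (g p) (g q) / π)
    rw [div_le_iff₀ pi_pos] at hle
    rw [← sub_lt_iff_lt_add, lt_div_iff₀ pi_pos] at hlt
    constructor <;> nlinarith [max_sub_min_eq_abs (g p) (g q)]
  obtain ⟨s, hs, hgs⟩ := intermediate_value_uIcc hg hk
  exact hsin s hs (by rw [hgs, sin_int_mul_pi])

theorem lt_of_abs_sub_lt_pi_of_sin_sub_pos {x y : ℝ} (h : |y - x| < π) (hsin : 0 < sin (y - x)) :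
    x < y := by
  by_contra! hyx
  have := sin_nonpos_of_nonpos_of_neg_pi_le (sub_nonpos.2 hyx) (neg_le_of_abs_le h.le)
  linarith

theorem lt_of_sin_add_ne_zero_of_sin_sub_pos {g : ℝ → ℝ} {p q : ℝ} (φ : ℝ)
    (hg : ContinuousOn g (uIcc p q)) (hsin : ∀ s ∈ uIcc p q, sin (g s + φ) ≠ 0)
    (hturn : 0 < sin (g q - g p)) : g p < g q := by
  refine lt_of_abs_sub_lt_pi_of_sin_sub_pos ?_ hturn
  simpa using abs_sub_lt_pi_of_sin_ne_zero (hg.add continuousOn_const) hsin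

theorem sin_sub_pos_of_mul_pos_of_mul_neg {x y : ℝ} (h₁ : 0 < sin y * cos x)
    (h₂ : cos y * sin x < 0) : 0 < sin (y - x) := by
  rw [sin_sub]
  linarith

theorem not_continuousOn_of_boundary_signs {a b c d : ℝ} (hab : a < b) (hcd : c < d)
    {θ : ℝ × ℝ → ℝ}
    (ha : ∀ t ∈ Icc c d, cos (θ (a, t)) < 0) (hb : ∀ t ∈ Icc c d, 0 < cos (θ (b, t)))
    (hc : ∀ s ∈ Icc a b, sin (θ (s, c)) < 0) (hd : ∀ s ∈ Icc a b, 0 < sin (θ (s, d))) :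
    ¬ ContinuousOn θ (Icc a b ×ˢ Icc c d) := by
  intro hθ
  have ha' := left_mem_Icc.2 hab.le
  have hb' := right_mem_Icc.2 hab.le
  have hc' := left_mem_Icc.2 hcd.le
  have hd' := right_mem_Icc.2 hcd.le
  have bottom : θ (a, c) < θ (b, c) :=
    lt_of_sin_add_ne_zero_of_sin_sub_pos (g := fun s => θ (s, c)) 0
      (hθ.comp (by fun_prop) fun s hs => ⟨uIcc_of_le hab.le ▸ hs, hc'⟩)
      (fun s hs => by simpa using (hc s (uIcc_of_le hab.le ▸ hs)).ne)
      (sin_sub_pos_of_mul_pos_of_mul_neg (mul_pos_of_neg_of_neg (hc b hb') (ha c hc'))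
        (mul_neg_of_pos_of_neg (hb c hc') (hc a ha')))
  have right : θ (b, c) < θ (b, d) :=
    lt_of_sin_add_ne_zero_of_sin_sub_pos (g := fun t => θ (b, t)) (π / 2)
      (hθ.comp (by fun_prop) fun t ht => ⟨hb', uIcc_of_le hcd.le ▸ ht⟩)
      (fun t ht => by simpa [sin_add_pi_div_two] using (hb t (uIcc_of_le hcd.le ▸ ht)).ne')
      (sin_sub_pos_of_mul_pos_of_mul_neg (mul_pos (hd b hb') (hb c hc'))
        (mul_neg_of_pos_of_neg (hb d hd') (hc b hb')))
  have top : θ (b, d) < θ (a, d) :=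
    lt_of_sin_add_ne_zero_of_sin_sub_pos (g := fun s => θ (s, d)) 0
      (hθ.comp (by fun_prop) fun s hs => ⟨uIcc_of_ge hab.le ▸ hs, hd'⟩)
      (fun s hs => by simpa using (hd s (uIcc_of_ge hab.le ▸ hs)).ne')
      (sin_sub_pos_of_mul_pos_of_mul_neg (mul_pos (hd a ha') (hb d hd'))
        (mul_neg_of_neg_of_pos (ha d hd') (hd b hb')))
  have left : θ (a, d) < θ (a, c) :=
    lt_of_sin_add_ne_zero_of_sin_sub_pos (g := fun t => θ (a, t)) (π / 2)
      (hθ.comp (by fun_prop) fun t ht => ⟨ha', uIcc_of_ge hcd.le ▸ ht⟩)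
      (fun t ht => by simpa [sin_add_pi_div_two] using (ha t (uIcc_of_ge hcd.le ▸ ht)).ne)
      (sin_sub_pos_of_mul_pos_of_mul_neg (mul_pos_of_neg_of_neg (hc a ha') (ha d hd'))
        (mul_neg_of_neg_of_pos (ha c hc') (hd a ha')))
  linarith

theorem Convex.exists_continuousOn_exp_eq {E : Type*} [AddCommGroup E] [TopologicalSpace E]
    [IsTopologicalAddGroup E] [Module ℝ E] [ContinuousSMul ℝ E] [LocallyConvexSpace ℝ E]
    {s : Set E} (hs : Convex ℝ s) {f : E → ℂ} (hf : ContinuousOn f s) (hf0 : ∀ x ∈ s, f x ≠ 0) :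
    ∃ L : E → ℂ, ContinuousOn L s ∧ ∀ x ∈ s, Complex.exp (L x) = f x := by
  classical
  rcases s.eq_empty_or_nonempty with rfl | ⟨x₀, hx₀⟩
  · exact ⟨0, continuousOn_empty _, by simp⟩
  have := hs.contractibleSpace ⟨x₀, hx₀⟩
  have := hs.locallyPathConnectedSpace
  obtain ⟨L, -, hL⟩ := (Complex.isCoveringMapOn_exp.existsUnique_continuousMap_lifts
    ⟨s.domRestrict f, hf.domRestrict⟩ (a₀ := ⟨x₀, hx₀⟩) (Complex.exp_log (hf0 x₀ hx₀))
    fun x => hf0 x x.2).exists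
  refine ⟨fun x => if hx : x ∈ s then L ⟨x, hx⟩ else 0, ?_, fun x hx => ?_⟩
  · rw [continuousOn_iff_continuous_domRestrict]
    convert L.continuous
    ext x
    simp [x.2]
  · simpa [hx] using congrFun hL ⟨x, hx⟩

theorem mem_Ioo_of_eq_zero {a b c d : ℝ} {F : ℝ × ℝ → ℝ × ℝ}
    (h1a : ∀ t ∈ Icc c d, (F (a, t)).1 < 0) (h1b : ∀ t ∈ Icc c d, 0 < (F (b, t)).1)
    (h2c : ∀ s ∈ Icc a b, (F (s, c)).2 < 0) (h2d : ∀ s ∈ Icc a b, 0 < (F (s, d)).2)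
    {s t : ℝ} (hs : s ∈ Icc a b) (ht : t ∈ Icc c d) (h0 : F (s, t) = 0) :
    s ∈ Ioo a b ∧ t ∈ Ioo c d := by
  have h₁ : (F (s, t)).1 = 0 := by rw [h0]; rfl
  have h₂ : (F (s, t)).2 = 0 := by rw [h0]; rfl
  refine ⟨⟨hs.1.lt_of_ne ?_, hs.2.lt_of_ne ?_⟩, ⟨ht.1.lt_of_ne ?_, ht.2.lt_of_ne ?_⟩⟩ <;>
    rintro rfl
  exacts [(h1a t ht).ne h₁, (h1b t ht).ne' h₁, (h2c s hs).ne h₂, (h2d s hs).ne' h₂]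

/-- Poincaré–Miranda theorem in dimension 2. -/
theorem stmt_1 (a b c d : ℝ) (hab : a < b) (hcd : c < d)
    (F : ℝ × ℝ → ℝ × ℝ) (hF : ContinuousOn F (Icc a b ×ˢ Icc c d))
    (h1a : ∀ t ∈ Icc c d, (F (a, t)).1 < 0)
    (h1b : ∀ t ∈ Icc c d, 0 < (F (b, t)).1)
    (h2c : ∀ s ∈ Icc a b, (F (s, c)).2 < 0)
    (h2d : ∀ s ∈ Icc a b, 0 < (F (s, d)).2) :
    ∃ s₀ ∈ Ioo a b, ∃ t₀ ∈ Ioo c d, F (s₀, t₀) = (0, 0) := by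
  by_contra! hcon
  have hF0 : ∀ p ∈ Icc a b ×ˢ Icc c d, Complex.equivRealProdCLM.symm (F p) ≠ 0 := by
    rintro ⟨s, t⟩ ⟨hs, ht⟩ h0
    have h0 : F (s, t) = 0 := by simpa using h0
    obtain ⟨hs', ht'⟩ := mem_Ioo_of_eq_zero h1a h1b h2c h2d hs ht h0
    exact hcon s hs' t ht' h0
  obtain ⟨L, hL, hLF⟩ := ((convex_Icc a b).prod (convex_Icc c d)).exists_continuousOn_exp_eq
    (Complex.equivRealProdCLM.symm.continuous.comp_continuousOn hF) hF0
  have polar : ∀ p ∈ Icc a b ×ˢ Icc c d,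
      (F p).1 = exp (L p).re * cos (L p).im ∧ (F p).2 = exp (L p).re * sin (L p).im :=
    fun p hp => by
      rw [← Complex.exp_re, ← Complex.exp_im, hLF p hp]
      simp
  refine not_continuousOn_of_boundary_signs hab hcd (fun t ht => ?_) (fun t ht => ?_)
    (fun s hs => ?_) (fun s hs => ?_) (Complex.continuous_im.comp_continuousOn hL)
  · have := (polar (a, t) ⟨left_mem_Icc.2 hab.le, ht⟩).1 ▸ h1a t ht
    exact neg_of_mul_neg_right this (exp_pos _).le
  · have := (polar (b, t) ⟨right_mem_Icc.2 hab.le, ht⟩).1 ▸ h1b t ht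
    exact pos_of_mul_pos_right this (exp_pos _).le
  · have := (polar (s, c) ⟨hs, left_mem_Icc.2 hcd.le⟩).2 ▸ h2c s hs
    exact neg_of_mul_neg_right this (exp_pos _).le
  · have := (polar (s, d) ⟨hs, right_mem_Icc.2 hcd.le⟩).2 ▸ h2d s hs
    exact pos_of_mul_pos_right this (exp_pos _).le
end

section
/- Let H:[0,1]×[0,π]→S² be a continuous map with H(s,0)=N=(0,0,1) and H(s,π)=S=(0,0,-1) for all s∈[0,1]. Then there exists a connected subset Λ of ([0,1]×[0,π]) contained in H⁻¹(Eq) (where Eq is the equator {p∈S² : z(p)=0}) such that Λ intersects both {0}×[0,π] and {1}×[0,π]. -/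
/-!
Write `f = z ∘ H`. If no connected subset of the zero set `Z` of `f` joined the two vertical
sides, then `Z` would split into two disjoint closed pieces, one containing `Z ∩ {s = 0}` and the
other `Z ∩ {s = 1}`. An Urysohn function `g` equal to `-1/2` on the first piece and the left side
and to `1/2` on the second piece and the right side then never vanishes together with `f`. But
`(f, g)` satisfies the sign conditions of the Poincaré–Miranda theorem (`f > 0` at the bottom,
`f < 0` at the top, `g < 0` on the left, `g > 0` on the right), which is proved by lifting the
argument of `f + g i` to the rectangle: along each of the four sides the argument must increase
strictly, which is impossible around a closed loop.
-/

open Set Real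

/-- The unit 2-sphere in `ℝ³` (as `ℝ × ℝ × ℝ`). -/
def unitSphere : Set (ℝ × ℝ × ℝ) := {p | p.1 ^ 2 + p.2.1 ^ 2 + p.2.2 ^ 2 = 1}

theorem Convex.exists_continuousOn_exp_eq_s4 {E : Type*} [NormedAddCommGroup E] [NormedSpace ℝ E]
    {S : Set E} (hS : Convex ℝ S) {G : E → ℂ} (hG : ContinuousOn G S)
    (hG0 : ∀ x ∈ S, G x ≠ 0) :
    ∃ L : E → ℂ, ContinuousOn L S ∧ ∀ x ∈ S, Complex.exp (L x) = G x := by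
  rcases S.eq_empty_or_nonempty with rfl | ⟨x₀, hx₀⟩
  · exact ⟨0, continuousOn_empty _, fun _ h => h.elim⟩
  classical
  have := hS.contractibleSpace ⟨x₀, hx₀⟩
  have := hS.locallyPathConnectedSpace
  obtain ⟨F, ⟨-, hF⟩, -⟩ := Complex.isCoveringMapOn_exp.existsUnique_continuousMap_lifts
    ⟨S.domRestrict G, hG.domRestrict⟩ (a₀ := ⟨x₀, hx₀⟩) (Complex.exp_log (hG0 x₀ hx₀))
    fun x => hG0 x x.2
  refine ⟨fun x => if hx : x ∈ S then F ⟨x, hx⟩ else 0, ?_, fun x hx => ?_⟩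
  · rw [continuousOn_iff_continuous_domRestrict]
    convert F.continuous
    ext x
    simp [x.2]
  · simpa [hx] using congrFun hF ⟨x, hx⟩

theorem IsPreconnected.im_lt_im_of_re_exp_pos {X : Type*} [TopologicalSpace X] {K : Set X}
    (hK : IsPreconnected K) {L : X → ℂ} (hL : ContinuousOn L K)
    (hre : ∀ x ∈ K, 0 < (Complex.exp (L x)).re) {p q : X} (hp : p ∈ K) (hq : q ∈ K)
    (hp' : (Complex.exp (L p)).im < 0) (hq' : 0 < (Complex.exp (L q)).im) :
    (L p).im < (L q).im := by
  simp only [Complex.exp_re, Complex.exp_im, mul_pos_iff_of_pos_left (Real.exp_pos _)] at hre hq'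
  replace hp' := neg_of_mul_neg_right (by rwa [Complex.exp_im] at hp') (Real.exp_pos _).le
  by_contra! hle
  have hcos : ∀ y ∈ Icc (L q).im (L p).im, 0 < cos y := by
    intro y hy
    obtain ⟨x, hx, rfl⟩ := (hK.image _ (Complex.continuous_im.comp_continuousOn hL)).Icc_subset
      (mem_image_of_mem _ hq) (mem_image_of_mem _ hp) hy
    exact hre x hx
  have hsin : MonotoneOn sin (Icc (L q).im (L p).im) :=
    (strictMonoOn_of_deriv_pos (convex_Icc _ _) continuousOn_sin fun y hy => by
      simpa using hcos y (interior_subset hy)).monotoneOn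
  linarith [hsin ⟨le_rfl, hle⟩ ⟨hle, le_rfl⟩ hle]

open Complex in
theorem exists_common_zero_Icc_prod_Icc {a b c d : ℝ} (hab : a ≤ b) (hcd : c ≤ d)
    {f g : ℝ × ℝ → ℝ} (hf : ContinuousOn f (Icc a b ×ˢ Icc c d))
    (hg : ContinuousOn g (Icc a b ×ˢ Icc c d))
    (hfc : ∀ x ∈ Icc a b, 0 < f (x, c)) (hfd : ∀ x ∈ Icc a b, f (x, d) < 0)
    (hga : ∀ y ∈ Icc c d, g (a, y) < 0) (hgb : ∀ y ∈ Icc c d, 0 < g (b, y)) :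
    ∃ p ∈ Icc a b ×ˢ Icc c d, f p = 0 ∧ g p = 0 := by
  by_contra! hfg
  set G : ℝ × ℝ → ℂ := fun p => f p + g p * I
  have hG : ContinuousOn G (Icc a b ×ˢ Icc c d) := by fun_prop
  have hG0 : ∀ p ∈ Icc a b ×ˢ Icc c d, G p ≠ 0 := fun p hp h0 =>
    hfg p hp (by simpa [G] using congrArg re h0) (by simpa [G] using congrArg im h0)
  obtain ⟨L, hL, hLG⟩ :=
    ((convex_Icc a b).prod (convex_Icc c d)).exists_continuousOn_exp_eq_s4 hG hG0
  -- Going once around the boundary, `im ∘ L` would have to strictly increase along every edge.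
  have edge : ∀ (w : ℂ) (K : Set (ℝ × ℝ)) (p q : ℝ × ℝ), IsPreconnected K →
      K ⊆ Icc a b ×ˢ Icc c d → p ∈ K → q ∈ K → (∀ x ∈ K, 0 < (G x * exp w).re) →
      (G p * exp w).im < 0 → 0 < (G q * exp w).im → (L p).im < (L q).im := by
    intro w K p q hK hKR hp hq hre hp' hq'
    have hLw : ∀ x ∈ K, exp (L x + w) = G x * exp w := fun x hx => by
      rw [Complex.exp_add, hLG x (hKR hx)]
    have := hK.im_lt_im_of_re_exp_pos (L := fun x => L x + w)
      ((hL.mono hKR).add continuousOn_const) (fun x hx => by rw [hLw x hx]; exact hre x hx) hp hq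
      (by rwa [hLw p hp]) (by rwa [hLw q hq])
    simpa using this
  have ha : a ∈ Icc a b := left_mem_Icc.2 hab
  have hb : b ∈ Icc a b := right_mem_Icc.2 hab
  have hc : c ∈ Icc c d := left_mem_Icc.2 hcd
  have hd : d ∈ Icc c d := right_mem_Icc.2 hcd
  have hbottom := edge 0 (Icc a b ×ˢ {c}) (a, c) (b, c)
    (isPreconnected_Icc.prod isPreconnected_singleton)
    (prod_mono subset_rfl (singleton_subset_iff.2 hc)) ⟨ha, rfl⟩ ⟨hb, rfl⟩
    (by rintro ⟨x, _⟩ ⟨hx, rfl⟩; simpa [G] using hfc x hx) (by simpa [G] using hga c hc)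
    (by simpa [G] using hgb c hc)
  have hright := edge (-π / 2 * I) ({b} ×ˢ Icc c d) (b, c) (b, d)
    (isPreconnected_singleton.prod isPreconnected_Icc)
    (prod_mono (singleton_subset_iff.2 hb) subset_rfl) ⟨rfl, hc⟩ ⟨rfl, hd⟩
    (by rintro ⟨_, y⟩ ⟨rfl, hy⟩; simpa [G, exp_neg_pi_div_two_mul_I] using hgb y hy)
    (by simpa [G, exp_neg_pi_div_two_mul_I] using hfc b hb)
    (by simpa [G, exp_neg_pi_div_two_mul_I] using hfd b hb)
  have htop := edge (π * I) (Icc a b ×ˢ {d}) (b, d) (a, d)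
    (isPreconnected_Icc.prod isPreconnected_singleton)
    (prod_mono subset_rfl (singleton_subset_iff.2 hd)) ⟨hb, rfl⟩ ⟨ha, rfl⟩
    (by rintro ⟨x, _⟩ ⟨hx, rfl⟩; simpa [G, exp_pi_mul_I] using hfd x hx)
    (by simpa [G, exp_pi_mul_I] using hgb d hd) (by simpa [G, exp_pi_mul_I] using hga d hd)
  have hleft := edge (π / 2 * I) ({a} ×ˢ Icc c d) (a, d) (a, c)
    (isPreconnected_singleton.prod isPreconnected_Icc)
    (prod_mono (singleton_subset_iff.2 ha) subset_rfl) ⟨rfl, hd⟩ ⟨rfl, hc⟩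
    (by rintro ⟨_, y⟩ ⟨rfl, hy⟩; simpa [G, exp_pi_div_two_mul_I] using hga y hy)
    (by simpa [G, exp_pi_div_two_mul_I] using hfd a ha)
    (by simpa [G, exp_pi_div_two_mul_I] using hfc a ha)
  linarith

theorem IsCompact.exists_isClosed_separation {X : Type*} [TopologicalSpace X] [T2Space X]
    {Z A B : Set X} (hZ : IsCompact Z) (hA : IsClosed A) (hB : IsClosed B)
    (hAB : ∀ C ⊆ Z, IsConnected C → (C ∩ A).Nonempty → ¬(C ∩ B).Nonempty) :
    ∃ U V : Set X, IsClosed U ∧ IsClosed V ∧ Disjoint U V ∧ U ∪ V = Z ∧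
      Z ∩ A ⊆ U ∧ Z ∩ B ⊆ V := by
  have := isCompact_iff_compactSpace.mp hZ
  -- In the compact Hausdorff space of components of `Z`, the images of `A` and `B` are disjoint
  -- compact sets, hence separated by a clopen set.
  let q : Z → ConnectedComponents Z := (↑)
  have hq : Continuous q := ConnectedComponents.continuous_coe
  have hAq : IsClosed (q '' (Subtype.val ⁻¹' A)) :=
    ((hA.preimage continuous_subtype_val).isCompact.image hq).isClosed
  have hBq : IsClosed (q '' (Subtype.val ⁻¹' B)) :=
    ((hB.preimage continuous_subtype_val).isCompact.image hq).isClosed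
  have hdisj : q '' (Subtype.val ⁻¹' A) ⊆ (q '' (Subtype.val ⁻¹' B))ᶜ := by
    rintro _ ⟨x, hxA, rfl⟩ ⟨y, hyB, hxy⟩
    refine hAB _ (image_subset_range _ _ |>.trans Subtype.range_coe.subset)
      (isConnected_connectedComponent.image _ continuous_subtype_val.continuousOn)
      ⟨x, mem_image_of_mem _ mem_connectedComponent, hxA⟩
      ⟨y, mem_image_of_mem _ (ConnectedComponents.coe_eq_coe'.1 hxy), hyB⟩
  obtain ⟨W, hW, hAW, hWB⟩ := exists_clopen_of_closed_subset_open hAq hBq.isOpen_compl hdisj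
  have hclosed : ∀ s : Set Z, IsClosed s → IsClosed (Subtype.val '' s) := fun s hs =>
    (hs.isCompact.image continuous_subtype_val).isClosed
  refine ⟨Subtype.val '' (q ⁻¹' W), Subtype.val '' (q ⁻¹' W)ᶜ,
    hclosed _ (hW.isClosed.preimage hq), hclosed _ (hW.isOpen.isClosed_compl.preimage hq),
    disjoint_compl_right.image Subtype.val_injective.injOn (subset_univ _) (subset_univ _),
    ?_, ?_, ?_⟩
  · rw [← image_union, union_compl_self, image_univ, Subtype.range_coe]
  · rintro x ⟨hxZ, hxA⟩
    exact ⟨⟨x, hxZ⟩, hAW ⟨⟨x, hxZ⟩, hxA, rfl⟩, rfl⟩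
  · rintro x ⟨hxZ, hxB⟩
    exact ⟨⟨x, hxZ⟩, fun hxW => hWB hxW ⟨⟨x, hxZ⟩, hxB, rfl⟩, rfl⟩

theorem exists_isConnected_zero_crossing {a b c d : ℝ} (hab : a < b) (hcd : c ≤ d)
    {f : ℝ × ℝ → ℝ} (hf : ContinuousOn f (Icc a b ×ˢ Icc c d))
    (hfc : ∀ x ∈ Icc a b, 0 < f (x, c)) (hfd : ∀ x ∈ Icc a b, f (x, d) < 0) :
    ∃ Λ : Set (ℝ × ℝ), Λ ⊆ Icc a b ×ˢ Icc c d ∧ IsConnected Λ ∧ (∀ x ∈ Λ, f x = 0) ∧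
      (Λ ∩ ({a} ×ˢ Icc c d)).Nonempty ∧ (Λ ∩ ({b} ×ˢ Icc c d)).Nonempty := by
  by_contra! hΛ
  set Z := Icc a b ×ˢ Icc c d ∩ f ⁻¹' {0}
  have hZ : IsCompact Z := (isCompact_Icc.prod isCompact_Icc).of_isClosed_subset
    (hf.preimage_isClosed_of_isClosed (isClosed_Icc.prod isClosed_Icc) isClosed_singleton)
    inter_subset_left
  obtain ⟨U, V, hU, hV, hUV, hUVZ, hAU, hBV⟩ := hZ.exists_isClosed_separation
    (isClosed_singleton.prod isClosed_Icc) (isClosed_singleton.prod isClosed_Icc)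
    fun C hCZ hC hCA hCB => hCB.ne_empty
      (hΛ C (hCZ.trans inter_subset_left) hC (fun x hx => (hCZ hx).2) hCA)
  have hUZ : U ⊆ Z := hUVZ ▸ subset_union_left
  have hVZ : V ⊆ Z := hUVZ ▸ subset_union_right
  have hdisj : Disjoint (U ∪ {a} ×ˢ Icc c d) (V ∪ {b} ×ˢ Icc c d) := by
    refine disjoint_union_left.2
      ⟨disjoint_union_right.2 ⟨hUV, ?_⟩, disjoint_union_right.2 ⟨?_, ?_⟩⟩
    · exact disjoint_left.2 fun x hxU hxB => disjoint_left.1 hUV hxU (hBV ⟨hUZ hxU, hxB⟩)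
    · exact disjoint_left.2 fun x hxA hxV => disjoint_left.1 hUV (hAU ⟨hVZ hxV, hxA⟩) hxV
    · exact disjoint_left.2 fun x hxA hxB => hab.ne (hxA.1.symm.trans hxB.1)
  obtain ⟨φ, hφA, hφB, -⟩ := exists_continuous_zero_one_of_isClosed
    (hU.union (isClosed_singleton.prod isClosed_Icc))
    (hV.union (isClosed_singleton.prod isClosed_Icc)) hdisj
  obtain ⟨p, hpR, hfp, hφp⟩ := exists_common_zero_Icc_prod_Icc hab.le hcd hf
    (g := fun x => φ x - 1 / 2) (φ.continuous.sub continuous_const).continuousOn hfc hfd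
    (fun y hy => by norm_num [hφA (x := (a, y)) (Or.inr ⟨rfl, hy⟩)])
    (fun y hy => by norm_num [hφB (x := (b, y)) (Or.inr ⟨rfl, hy⟩)])
  rcases (hUVZ.symm ▸ ⟨hpR, hfp⟩ : p ∈ U ∪ V) with hpU | hpV
  · norm_num [hφA (Or.inl hpU)] at hφp
  · norm_num [hφB (Or.inl hpV)] at hφp

theorem stmt_4_general (H : ℝ × ℝ → ℝ × ℝ × ℝ)
    (hcont : ContinuousOn H (Icc 0 1 ×ˢ Icc 0 π))
    (hN : ∀ s ∈ Icc (0:ℝ) 1, H (s, 0) = (0, 0, 1))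
    (hS : ∀ s ∈ Icc (0:ℝ) 1, H (s, π) = (0, 0, -1)) :
    ∃ Λ : Set (ℝ × ℝ), Λ ⊆ Icc 0 1 ×ˢ Icc 0 π ∧
      IsConnected Λ ∧
      (∀ x ∈ Λ, (H x).2.2 = 0) ∧
      (Λ ∩ ({0} ×ˢ Icc 0 π)).Nonempty ∧
      (Λ ∩ ({1} ×ˢ Icc 0 π)).Nonempty :=
  exists_isConnected_zero_crossing zero_lt_one pi_pos.le
    ((continuous_snd.comp continuous_snd).comp_continuousOn hcont)
    (fun s hs => by simp [hN s hs]) (fun s hs => by simp [hS s hs])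

theorem stmt_4 (H : ℝ × ℝ → ℝ × ℝ × ℝ)
    (hcont : ContinuousOn H (Icc 0 1 ×ˢ Icc 0 π))
    (hsphere : ∀ x ∈ Icc (0:ℝ) 1 ×ˢ Icc (0:ℝ) π, H x ∈ unitSphere)
    (hN : ∀ s ∈ Icc (0:ℝ) 1, H (s, 0) = (0, 0, 1))
    (hS : ∀ s ∈ Icc (0:ℝ) 1, H (s, π) = (0, 0, -1)) :
    ∃ Λ : Set (ℝ × ℝ), Λ ⊆ Icc 0 1 ×ˢ Icc 0 π ∧
      IsConnected Λ ∧
      (∀ x ∈ Λ, (H x).2.2 = 0) ∧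
      (Λ ∩ ({0} ×ˢ Icc 0 π)).Nonempty ∧
      (Λ ∩ ({1} ×ˢ Icc 0 π)).Nonempty :=
  stmt_4_general H hcont hN hS
end

section
/- In the spacetime (ℝ×S², -dt²+π*(Ω·g₀)) with Ω as in the causal example (Ω≥1, Ω=1 on infinitely many meridians, Ω>1 on the intermediate equatorial points), the point (π,S) lies in J⁺((0,N)) but not in I⁺((0,N)); i.e., (0,N) and (π,S) are horismotically related. -/
open Set Real MeasureTheory

noncomputable section

abbrev E3 : Type := EuclideanSpace ℝ (Fin 3)

def meridian (φ t : ℝ) : E3 :=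
  (WithLp.equiv 2 (Fin 3 → ℝ)).symm ![Real.sin t * Real.cos φ, Real.sin t * Real.sin φ, Real.cos t]

def NP : E3 := (WithLp.equiv 2 (Fin 3 → ℝ)).symm ![0, 0, 1]

def SP : E3 := (WithLp.equiv 2 (Fin 3 → ℝ)).symm ![0, 0, -1]

def equatorPt (φ : ℝ) : E3 := meridian φ (π / 2)

/-- Spatial projection (parametrized by time over `[0,π]`) of a future-directed
causal-continuous curve in `(ℝ × S², -dt² + Ω g₀)`. -/
def IsCausalSpatial (Ω : E3 → ℝ) (σ : ℝ → E3) : Prop :=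
  (∀ t ∈ Icc (0:ℝ) π, ‖σ t‖ = 1) ∧
  (∃ K : NNReal, LipschitzOnWith K σ (Icc 0 π)) ∧
  ∀ᵐ t ∂(volume.restrict (Icc (0:ℝ) π)),
    DifferentiableAt ℝ σ t → Ω (σ t) * ‖deriv σ t‖ ^ 2 ≤ 1

/-!
The meridian `φ = 1 / π`, on which `Ω = 1`, is a unit-speed causal curve from `N` to `S`.
A timelike `C¹` curve has speed `‖σ'‖ < Ω(σ)^(-1/2) ≤ 1` on the compact interval `[0, π]`, hence
speed at most some `K < 1`, so it is `K`-Lipschitz. Comparing chords with arcs on a fine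
subdivision, the angle between the endpoints of a `K`-Lipschitz curve on the unit sphere is at
most `K π < π`; but `N` and `S` are antipodal.
-/

open Filter Topology InnerProductGeometry
open scoped NNReal

namespace InnerProductGeometry

variable {V : Type*} [NormedAddCommGroup V] [InnerProductSpace ℝ V]

theorem norm_sub_eq_two_mul_sin_angle_div_two {p q : V} (hp : ‖p‖ = 1) (hq : ‖q‖ = 1) :
    ‖p - q‖ = 2 * sin (angle p q / 2) := by
  have hsin : 0 ≤ sin (angle p q / 2) :=
    sin_nonneg_of_nonneg_of_le_pi (by linarith [angle_nonneg p q])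
      (by linarith [angle_le_pi p q, pi_pos])
  have hcos : cos (angle p q) = 1 - 2 * sin (angle p q / 2) ^ 2 := by
    have h := cos_sq (angle p q / 2)
    rw [mul_div_cancel₀ _ two_ne_zero] at h
    linarith [sin_sq_add_cos_sq (angle p q / 2)]
  have hsq : ‖p - q‖ ^ 2 = (2 * sin (angle p q / 2)) ^ 2 := by
    rw [norm_sub_sq_real, hp, hq, inner_eq_cos_angle_of_norm_eq_one hp hq, hcos]
    ring
  exact (pow_left_inj₀ (norm_nonneg _) (by positivity) two_ne_zero).1 hsq

theorem angle_le_of_norm_sub_le_two_mul_sin {p q : V} (hp : ‖p‖ = 1) (hq : ‖q‖ = 1) {M : ℝ}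
    (hM₀ : 0 ≤ M) (hMπ : M ≤ π) (h : ‖p - q‖ ≤ 2 * sin (M / 2)) : angle p q ≤ M := by
  rw [norm_sub_eq_two_mul_sin_angle_div_two hp hq, mul_le_mul_iff_right₀ two_pos] at h
  have hθ : angle p q / 2 ∈ Icc (-(π / 2)) (π / 2) :=
    ⟨by linarith [angle_nonneg p q, pi_pos], by linarith [angle_le_pi p q]⟩
  have hM : M / 2 ∈ Icc (-(π / 2)) (π / 2) := ⟨by linarith [pi_pos], by linarith⟩
  linarith [(strictMonoOn_sin.le_iff_le hθ hM).1 h]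

theorem angle_le_sum_range_angle (x : ℕ → V) (hx : x 0 ≠ 0) (n : ℕ) :
    angle (x 0) (x n) ≤ ∑ i ∈ Finset.range n, angle (x i) (x (i + 1)) := by
  induction n with
  | zero => simp [angle_self hx]
  | succ n ih =>
    rw [Finset.sum_range_succ]
    exact (angle_le_angle_add_angle _ (x n) _).trans (by gcongr)

theorem angle_le_mul_of_lipschitzOnWith_of_lt {σ : ℝ → V} {K : ℝ≥0} {K' a b : ℝ} (hab : a ≤ b)
    (hK : K < K') (hσ : ∀ t ∈ Icc a b, ‖σ t‖ = 1) (hL : LipschitzOnWith K σ (Icc a b)) :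
    angle (σ a) (σ b) ≤ K' * (b - a) := by
  have hK' : 0 < K' := K.2.trans_lt hK
  -- small enough for `K h ≤ 2 sin (K' h / 2)`, as `2 sin (x / 2) ≥ x - x³ / 24`
  have hsmall : ∀ᶠ h in 𝓝 (0 : ℝ), K' ^ 3 * h ^ 2 < 24 * (K' - K) ∧ K' * h < π :=
    (ContinuousAt.eventually_lt (by fun_prop) continuousAt_const (by simpa using hK)).and
      (ContinuousAt.eventually_lt (by fun_prop) continuousAt_const (by simpa using pi_pos))
  obtain ⟨n, hn, hstep, hstepπ⟩ := ((eventually_gt_atTop 0).and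
    ((tendsto_const_div_atTop_nhds_zero_nat (b - a)).eventually hsmall)).exists
  set h := (b - a) / n
  have hh₀ : 0 ≤ h := div_nonneg (sub_nonneg.2 hab) n.cast_nonneg
  have hnh : n * h = b - a := mul_div_cancel₀ _ (Nat.cast_ne_zero.2 hn.ne')
  set t : ℕ → ℝ := fun i => a + i * h
  have ht_mem : ∀ i ≤ n, t i ∈ Icc a b := fun i hi =>
    ⟨le_add_of_nonneg_right (by positivity), by
      have : (i : ℝ) * h ≤ n * h := by gcongr
      simp only [t]; linarith⟩
  have hsin : K * h ≤ 2 * sin (K' * h / 2) := by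
    have := sin_ge_sub_cube (x := K' * h / 2) (by positivity)
    nlinarith [mul_le_mul_of_nonneg_right hstep.le hh₀]
  have hangle : ∀ i < n, angle (σ (t i)) (σ (t (i + 1))) ≤ K' * h := by
    intro i hi
    have hi₀ := ht_mem i hi.le
    have hi₁ := ht_mem (i + 1) hi
    refine angle_le_of_norm_sub_le_two_mul_sin (hσ _ hi₀) (hσ _ hi₁) (by positivity) hstepπ.le ?_
    calc ‖σ (t i) - σ (t (i + 1))‖ = dist (σ (t i)) (σ (t (i + 1))) := (dist_eq_norm _ _).symm
      _ ≤ K * dist (t i) (t (i + 1)) := hL.dist_le_mul _ hi₀ _ hi₁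
      _ = K * h := by simp [t, add_mul, abs_of_nonneg hh₀]
      _ ≤ 2 * sin (K' * h / 2) := hsin
  have ht₀ : t 0 = a := by simp [t]
  have htn : t n = b := by simp only [t]; linarith
  calc angle (σ a) (σ b) = angle (σ (t 0)) (σ (t n)) := by rw [ht₀, htn]
    _ ≤ ∑ i ∈ Finset.range n, angle (σ (t i)) (σ (t (i + 1))) :=
      angle_le_sum_range_angle (σ ∘ t) (by simp [ht₀, ← norm_ne_zero_iff, hσ a ⟨le_rfl, hab⟩]) n
    _ ≤ ∑ i ∈ Finset.range n, K' * h :=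
      Finset.sum_le_sum fun i hi => hangle i (Finset.mem_range.1 hi)
    _ = K' * (b - a) := by simp [← hnh]; ring

theorem angle_le_mul_of_lipschitzOnWith {σ : ℝ → V} {K : ℝ≥0} {a b : ℝ} (hab : a ≤ b)
    (hσ : ∀ t ∈ Icc a b, ‖σ t‖ = 1) (hL : LipschitzOnWith K σ (Icc a b)) :
    angle (σ a) (σ b) ≤ K * (b - a) :=
  ge_of_tendsto (((continuous_mul_const (b - a)).tendsto (K : ℝ)).mono_left nhdsWithin_le_nhds)
    (eventually_nhdsWithin_of_forall (s := Ioi (K : ℝ)) fun _ hK' =>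
      angle_le_mul_of_lipschitzOnWith_of_lt hab hK' hσ hL)

end InnerProductGeometry

theorem exists_lipschitzOnWith_lt_of_contDiffOn {E : Type*} [NormedAddCommGroup E]
    [NormedSpace ℝ E] {σ : ℝ → E} {a b C : ℝ} (hab : a < b) (hσ : ContDiffOn ℝ 1 σ (Icc a b))
    (hC : ∀ t ∈ Icc a b, ‖derivWithin σ (Icc a b) t‖ < C) :
    ∃ K : ℝ≥0, K < C ∧ LipschitzOnWith K σ (Icc a b) := by
  obtain ⟨t₀, ht₀, hmax⟩ := isCompact_Icc.exists_isMaxOn (nonempty_Icc.2 hab.le)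
    (hσ.continuousOn_derivWithin (uniqueDiffOn_Icc hab) le_rfl).norm
  exact ⟨‖derivWithin σ (Icc a b) t₀‖₊, hC t₀ ht₀,
    (convex_Icc a b).lipschitzOnWith_of_nnnorm_derivWithin_le (hσ.differentiableOn one_ne_zero)
      fun t ht => hmax ht⟩

theorem hasDerivAt_meridian (φ t : ℝ) : HasDerivAt (meridian φ) (meridian φ (t + π / 2)) t := by
  have h : HasDerivAt
      (fun s => (![sin s * cos φ, sin s * sin φ, cos s] : Fin 3 → ℝ))
      ![cos t * cos φ, cos t * sin φ, -sin t] t := by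
    rw [hasDerivAt_pi]
    intro i
    fin_cases i
    · simpa using (hasDerivAt_sin t).mul_const (cos φ)
    · simpa using (hasDerivAt_sin t).mul_const (sin φ)
    · simpa using hasDerivAt_cos t
  have hval : meridian φ (t + π / 2) =
      (EuclideanSpace.equiv (Fin 3) ℝ).symm ![cos t * cos φ, cos t * sin φ, -sin t] := by
    simp [meridian, sin_add_pi_div_two, cos_add_pi_div_two]
  rw [hval]
  exact (EuclideanSpace.equiv (Fin 3) ℝ).symm.toContinuousLinearMap.hasFDerivAt.comp_hasDerivAt t h

theorem norm_meridian (φ t : ℝ) : ‖meridian φ t‖ = 1 := by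
  rw [EuclideanSpace.norm_eq, Real.sqrt_eq_one]
  simp only [meridian, WithLp.equiv_symm_apply, norm_eq_abs, sq_abs, Fin.sum_univ_three,
    Matrix.cons_val_zero, Matrix.cons_val_one, Matrix.cons_val]
  nlinarith [sin_sq_add_cos_sq t, sin_sq_add_cos_sq φ]

theorem meridian_zero (φ : ℝ) : meridian φ 0 = NP := by
  ext i
  fin_cases i <;> simp [meridian, NP]

theorem meridian_pi (φ : ℝ) : meridian φ π = SP := by
  ext i
  fin_cases i <;> simp [meridian, SP]

theorem SP_eq_neg_NP : SP = -NP := by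
  ext i
  fin_cases i <;> simp [SP, NP]

theorem isCausalSpatial_meridian {Ω : E3 → ℝ} {φ : ℝ}
    (hΩ : ∀ t ∈ Icc (0 : ℝ) π, Ω (meridian φ t) ≤ 1) : IsCausalSpatial Ω (meridian φ) := by
  have hderiv (t : ℝ) : ‖deriv (meridian φ) t‖ = 1 := by
    rw [(hasDerivAt_meridian φ t).deriv, norm_meridian]
  refine ⟨fun t _ => norm_meridian φ t, ⟨1, ?_⟩, ?_⟩
  · refine (lipschitzWith_of_nnnorm_deriv_le (fun t => (hasDerivAt_meridian φ t).differentiableAt)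
      fun t => ?_).lipschitzOnWith
    rw [← NNReal.coe_le_coe, coe_nnnorm, hderiv]; rfl
  · exact ae_restrict_of_forall_mem measurableSet_Icc fun t ht _ => by simpa [hderiv] using hΩ t ht

theorem stmt_14_general (Ω : E3 → ℝ)
    (hΩ1 : ∀ p : E3, ‖p‖ = 1 → 1 ≤ Ω p)
    (hΩmer : ∀ n : ℕ, 1 ≤ n → ∀ t ∈ Icc (0:ℝ) π, Ω (meridian (1 / (n * π)) t) = 1) :
    (∃ σ : ℝ → E3, IsCausalSpatial Ω σ ∧ σ 0 = NP ∧ σ π = SP) ∧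
    ¬ ∃ σ : ℝ → E3, ContDiffOn ℝ 1 σ (Icc 0 π) ∧
        (∀ t ∈ Icc (0:ℝ) π, ‖σ t‖ = 1) ∧ σ 0 = NP ∧ σ π = SP ∧
        ∀ t ∈ Icc (0:ℝ) π, Ω (σ t) * ‖derivWithin σ (Icc 0 π) t‖ ^ 2 < 1 := by
  refine ⟨⟨meridian (1 / π), isCausalSpatial_meridian fun t ht => ?_, meridian_zero _,
    meridian_pi _⟩, ?_⟩
  · simpa using (hΩmer 1 le_rfl t ht).le
  rintro ⟨σ, hσ, hunit, h0, hπ, htimelike⟩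
  have hspeed (t : ℝ) (ht : t ∈ Icc 0 π) : ‖derivWithin σ (Icc 0 π) t‖ < 1 := by
    nlinarith [htimelike t ht, hΩ1 _ (hunit t ht), norm_nonneg (derivWithin σ (Icc 0 π) t)]
  obtain ⟨K, hK, hL⟩ := exists_lipschitzOnWith_lt_of_contDiffOn pi_pos hσ hspeed
  have hangle := angle_le_mul_of_lipschitzOnWith pi_pos.le hunit hL
  have hNP : NP ≠ 0 := by
    rw [← norm_ne_zero_iff, ← h0, hunit 0 ⟨le_rfl, pi_pos.le⟩]
    exact one_ne_zero
  rw [h0, hπ, SP_eq_neg_NP, angle_self_neg_of_nonzero hNP, sub_zero] at hangle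
  nlinarith [pi_pos]

/-- `(π,S) ∈ J⁺((0,N)) \ I⁺((0,N))`: there is a causal curve from `(0,N)` to `(π,S)` but
no timelike one; the two events are horismotically related. -/
theorem stmt_14 (Ω : E3 → ℝ) (hΩcont : Continuous Ω)
    (hΩ1 : ∀ p : E3, ‖p‖ = 1 → 1 ≤ Ω p)
    (hΩmer : ∀ n : ℕ, 1 ≤ n → ∀ t ∈ Icc (0:ℝ) π, Ω (meridian (1 / (n * π)) t) = 1)
    (hΩeq : ∀ φ ∈ Ioo 0 (π / 2), (∀ n : ℕ, 1 ≤ n → φ ≠ 1 / (n * π)) →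
      1 < Ω (equatorPt φ)) :
    (∃ σ : ℝ → E3, IsCausalSpatial Ω σ ∧ σ 0 = NP ∧ σ π = SP) ∧
    ¬ ∃ σ : ℝ → E3, ContDiffOn ℝ 1 σ (Icc 0 π) ∧
        (∀ t ∈ Icc (0:ℝ) π, ‖σ t‖ = 1) ∧ σ 0 = NP ∧ σ π = SP ∧
        ∀ t ∈ Icc (0:ℝ) π, Ω (σ t) * ‖derivWithin σ (Icc 0 π) t‖ ^ 2 < 1 :=
  stmt_14_general Ω hΩ1 hΩmer

end
end
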